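/- Let β, N₀, κ, B, M > 0 and μ, D₀, ν, η ≥ 0 be real numbers with μ + (D₀ + νB)M > 0. The function P ↦ B·log₂(1 + MPβ/(BN₀)) / (P/κ + μ + (D₀ + νB)M + ηB·log₂(1 + MPβ/(BN₀))) on the domain P > 0 attains its maximum at the unique point P* = B N₀ (e^v − 1)/(Mβ), where v is the unique positive real number satisfying (v − 1)e^v = κMβ(μ + (D₀ + νB)M)/(B N₀) − 1. -/
import Mathlib

private lemma frac_aux (η L1 L2 D1 D2 : ℝ) (hL1 : 0 < L1) (hL2 : 0 < L2)
    (hD1 : 0 < D1) (hD2 : 0 < D2) (hη : 0 ≤ η) :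
    (L1 * D2 ≤ L2 * D1 → L1 / (D1 + η * L1) ≤ L2 / (D2 + η * L2)) ∧
    (L1 / (D1 + η * L1) = L2 / (D2 + η * L2) → L1 * D2 = L2 * D1) := by
  have h1 : 0 < D1 + η * L1 := by positivity
  have h2 : 0 < D2 + η * L2 := by positivity
  constructor
  · intro h
    rw [div_le_div_iff₀ h1 h2]
    nlinarith
  · intro h
    rw [div_eq_div_iff h1.ne' h2.ne'] at h
    nlinarith

private lemma core_aux (v t : ℝ) (hv : 0 < v) (ht : 0 < t) :
    Real.exp v * Real.log (1 + t) ≤ t + 1 + (v - 1) * Real.exp v ∧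
    (Real.exp v * Real.log (1 + t) = t + 1 + (v - 1) * Real.exp v →
      t = Real.exp v - 1) := by
  have hev : 0 < Real.exp v := Real.exp_pos v
  have hx : 0 < (1 + t) / Real.exp v := by positivity
  have hlx : Real.log ((1 + t) / Real.exp v) = Real.log (1 + t) - v := by
    rw [Real.log_div (by linarith) hev.ne', Real.log_exp]
  have h1 : Real.log ((1 + t) / Real.exp v) + 1 ≤ (1 + t) / Real.exp v := by
    have h := Real.add_one_le_exp (Real.log ((1 + t) / Real.exp v))
    rwa [Real.exp_log hx] at h
  have h1' := mul_le_mul_of_nonneg_right h1 hev.le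
  rw [div_mul_cancel₀ _ hev.ne', hlx] at h1'
  constructor
  · nlinarith [h1']
  · intro heq
    by_contra hne
    have hlogne : Real.log ((1 + t) / Real.exp v) ≠ 0 := by
      intro h
      have h2 := Real.exp_log hx
      rw [h, Real.exp_zero] at h2
      apply hne
      have : 1 + t = Real.exp v := by
        field_simp at h2
        linarith
      linarith
    have h2 : Real.log ((1 + t) / Real.exp v) + 1 < (1 + t) / Real.exp v := by
      have h := Real.add_one_lt_exp hlogne
      rwa [Real.exp_log hx] at h
    have h2' := mul_lt_mul_of_pos_right h2 hev
    rw [div_mul_cancel₀ _ hev.ne', hlx] at h2'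
    nlinarith [h2']

/-- The energy efficiency as a function of the transmit power `P`, for a fixed bandwidth
`B` and number of antennas `M`. -/
noncomputable def EE6 (β N₀ κ B M μ D₀ ν η P : ℝ) : ℝ :=
  B * Real.logb 2 (1 + M * P * β / (B * N₀)) /
    (P / κ + μ + (D₀ + ν * B) * M +
      η * B * Real.logb 2 (1 + M * P * β / (B * N₀)))

private lemma EE6_form (β N₀ κ B M μ D₀ ν η P a t : ℝ)
    (h1 : M * P * β / (B * N₀) = t) (h2 : P / κ = a * t) :
    EE6 β N₀ κ B M μ D₀ ν η P =
      (B * Real.logb 2 (1 + t)) /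
        ((a * t + (μ + (D₀ + ν * B) * M)) + η * (B * Real.logb 2 (1 + t))) := by
  unfold EE6
  rw [h1, h2]
  ring_nf

/-- Lemma 1 of the paper: for given `B, M`, the energy efficiency on `P > 0` attains its
maximum at the unique point `P* = B N₀ (e^v - 1)/(M β)`, where `v > 0` satisfies
`(v - 1) e^v = κ M β (μ + (D₀ + νB)M)/(B N₀) - 1`. -/
theorem stmt_6 (β N₀ κ B M μ D₀ ν η v : ℝ)
    (hβ : 0 < β) (hN : 0 < N₀) (hκ : 0 < κ) (hB : 0 < B) (hM : 0 < M)
    (hμ : 0 ≤ μ) (hD : 0 ≤ D₀) (hν : 0 ≤ ν) (hη : 0 ≤ η)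
    (hpos : 0 < μ + (D₀ + ν * B) * M) (hv : 0 < v)
    (hve : (v - 1) * Real.exp v =
      κ * M * β * (μ + (D₀ + ν * B) * M) / (B * N₀) - 1) :
    ∀ P : ℝ, 0 < P →
      EE6 β N₀ κ B M μ D₀ ν η P ≤
        EE6 β N₀ κ B M μ D₀ ν η (B * N₀ * (Real.exp v - 1) / (M * β)) ∧
      (EE6 β N₀ κ B M μ D₀ ν η P =
          EE6 β N₀ κ B M μ D₀ ν η (B * N₀ * (Real.exp v - 1) / (M * β)) →
        P = B * N₀ * (Real.exp v - 1) / (M * β)) := by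
  intro P hP
  have hev : 0 < Real.exp v := Real.exp_pos v
  have hev1 : 1 < Real.exp v := by
    calc (1:ℝ) = Real.exp 0 := Real.exp_zero.symm
    _ < Real.exp v := Real.exp_lt_exp.mpr hv
  have hl2 : 0 < Real.log 2 := Real.log_pos one_lt_two
  set a : ℝ := B * N₀ / (κ * M * β) with hadef
  have haP : 0 < a := by rw [hadef]; positivity
  set t : ℝ := M * P * β / (B * N₀) with htdef
  have ht : 0 < t := by rw [htdef]; positivity
  set s : ℝ := Real.exp v - 1 with hsdef
  have hs : 0 < s := by rw [hsdef]; linarith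
  -- the candidate point
  have hts : M * (B * N₀ * (Real.exp v - 1) / (M * β)) * β / (B * N₀) = s := by
    rw [hsdef]; field_simp
  have hPκ : P / κ = a * t := by
    rw [hadef, htdef]; field_simp
  have hPsκ : (B * N₀ * (Real.exp v - 1) / (M * β)) / κ = a * s := by
    rw [hadef, hsdef]; field_simp
  have hEEP := EE6_form β N₀ κ B M μ D₀ ν η P a t htdef.symm hPκ
  have hEES := EE6_form β N₀ κ B M μ D₀ ν η
      (B * N₀ * (Real.exp v - 1) / (M * β)) a s hts hPsκ
  -- C in terms of a, v
  have hCa : μ + (D₀ + ν * B) * M = a * ((v - 1) * Real.exp v + 1) := by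
    rw [hadef]
    rw [div_mul_eq_mul_div, eq_div_iff (by positivity : (κ * M * β : ℝ) ≠ 0)]
    have h' : κ * M * β * (μ + (D₀ + ν * B) * M) / (B * N₀)
        = (v - 1) * Real.exp v + 1 := by linarith
    rw [div_eq_iff (by positivity : (B * N₀ : ℝ) ≠ 0)] at h'
    linarith [h']
  -- positivity of pieces
  have hL1 : 0 < B * Real.logb 2 (1 + t) :=
    mul_pos hB (Real.logb_pos one_lt_two (by linarith))
  have hL2 : 0 < B * Real.logb 2 (1 + s) :=
    mul_pos hB (Real.logb_pos one_lt_two (by linarith))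
  have hD1 : 0 < a * t + (μ + (D₀ + ν * B) * M) := by positivity
  have hD2 : 0 < a * s + (μ + (D₀ + ν * B) * M) := by positivity
  -- logb computations
  have hlogb1 : Real.logb 2 (1 + t) = Real.log (1 + t) / Real.log 2 := rfl
  have hlogb2 : Real.logb 2 (1 + s) = v / Real.log 2 := by
    rw [hsdef]
    have : (1 : ℝ) + (Real.exp v - 1) = Real.exp v := by ring
    rw [this, Real.logb, Real.log_exp]
  have hcore := core_aux v t hv ht
  -- the two key ring identities
  have hid1 : (B * Real.logb 2 (1 + t)) * (a * s + (μ + (D₀ + ν * B) * M))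
      = (B * a / Real.log 2) * (Real.exp v * Real.log (1 + t)) * v := by
    rw [hlogb1, hCa, hsdef]; field_simp; ring
  have hid2 : (B * Real.logb 2 (1 + s)) * (a * t + (μ + (D₀ + ν * B) * M))
      = (B * a / Real.log 2) * (t + 1 + (v - 1) * Real.exp v) * v := by
    rw [hlogb2, hCa]; field_simp; ring
  have hfac : 0 < B * a / Real.log 2 * v := by positivity
  have hcross : (B * Real.logb 2 (1 + t)) * (a * s + (μ + (D₀ + ν * B) * M))
      ≤ (B * Real.logb 2 (1 + s)) * (a * t + (μ + (D₀ + ν * B) * M)) := by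
    rw [hid1, hid2]
    exact mul_le_mul_of_nonneg_right
      (mul_le_mul_of_nonneg_left hcore.1 (by positivity)) hv.le
  have hfa := frac_aux η (B * Real.logb 2 (1 + t)) (B * Real.logb 2 (1 + s))
      (a * t + (μ + (D₀ + ν * B) * M)) (a * s + (μ + (D₀ + ν * B) * M))
      hL1 hL2 hD1 hD2 hη
  constructor
  · rw [hEEP, hEES]
    exact hfa.1 hcross
  · intro heq
    rw [hEEP, hEES] at heq
    have heq2 := hfa.2 heq
    rw [hid1, hid2] at heq2
    have heq3 : Real.exp v * Real.log (1 + t) = t + 1 + (v - 1) * Real.exp v := by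
      have h := mul_right_cancel₀ (by positivity : (v:ℝ) ≠ 0) heq2
      exact mul_left_cancel₀ (by positivity : (B * a / Real.log 2 : ℝ) ≠ 0) h
    have hteq := hcore.2 heq3
    rw [htdef] at hteq
    rw [eq_div_iff (by positivity : (M * β : ℝ) ≠ 0)]
    rw [div_eq_iff (by positivity : (B * N₀ : ℝ) ≠ 0)] at hteq
    rw [hsdef]
    linear_combination hteq
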